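/- For every real number k₀, if a polynomial b(t,s) ∈ ℝ[t,s] divides μ(t,s), divides ν_{k₀}(t,s), and divides the product B(t)·B(s)·D(t)·D(s), then b is a unit (a nonzero constant). In other words, no nonconstant polynomial simultaneously divides gcd(μ, ν_{k₀}) and B(t)·B(s)·D(t)·D(s). -/

import Mathlib

/- In ℝ[t,s] (modelled as MvPolynomial (Fin 2) ℝ, with t = X 0 and s = X 1):
`inT p` is p(t), `inS p` is p(s). -/
noncomputable def inT (p : Polynomial ℝ) : MvPolynomial (Fin 2) ℝ :=
  Polynomial.aeval (MvPolynomial.X 0) p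

noncomputable def inS (p : Polynomial ℝ) : MvPolynomial (Fin 2) ℝ :=
  Polynomial.aeval (MvPolynomial.X 1) p

/-- μ(t,s) = A(t)B(s) + A(s)B(t). -/
noncomputable def muPoly (A B : Polynomial ℝ) : MvPolynomial (Fin 2) ℝ :=
  inT A * inS B + inS A * inT B

/-- ν_k(t,s) = C(t)D(s) − C(s)D(t) − (2k+1)π·D(t)D(s). -/
noncomputable def nuPoly (C D : Polynomial ℝ) (k : ℝ) : MvPolynomial (Fin 2) ℝ :=
  inT C * inS D - inS C * inT D -
    MvPolynomial.C ((2 * k + 1) * Real.pi) * (inT D * inS D)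

/-!
Modulo `B(t)` we have `μ ≡ A(t)B(s)`. Here `A(t)` is coprime to `B(t)` because `A` and `B` are,
and `B(s)` is coprime to `B(t)` because a common divisor of a nonzero polynomial in `t` alone and
one in `s` alone involves neither variable, so it is a nonzero constant. Hence `μ` has no common
non-unit factor with `B(t)`, nor, symmetrically, with `B(s)`; in the same way `ν_k` has none with
`D(t)` or `D(s)`. A common divisor of `μ`, `ν_{k₀}` and `B(t)B(s)D(t)D(s)` is therefore coprime to
itself, that is, a unit.
-/

open MvPolynomial

namespace MvPolynomial

variable {σ R : Type*}

theorem vars_subset_of_dvd [CommSemiring R] [NoZeroDivisors R] {f g : MvPolynomial σ R}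
    (h : f ∣ g) (hg : g ≠ 0) : f.vars ⊆ g.vars := by
  classical
  obtain ⟨e, rfl⟩ := h
  rw [vars_def, vars_def, degrees_mul_eq (left_ne_zero_of_mul hg) (right_ne_zero_of_mul hg),
    Multiset.toFinset_add]
  exact Finset.subset_union_left

theorem _root_.Polynomial.vars_toMvPolynomial_subset [CommSemiring R] (i : σ) (p : Polynomial R) :
    (p.toMvPolynomial i).vars ⊆ {i} := by
  have : p.toMvPolynomial i ∈ supported R {i} := by
    rw [supported_eq_adjoin_X, Set.image_singleton]
    exact Polynomial.aeval_mem_adjoin_singleton R _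
  exact_mod_cast mem_supported.mp this

theorem isRelPrime_of_disjoint_vars [Field R] {f g : MvPolynomial σ R} (hf : f ≠ 0)
    (hg : g ≠ 0) (h : Disjoint f.vars g.vars) : IsRelPrime f g := by
  intro d hdf hdg
  have hd : d.vars = ∅ := Finset.subset_empty.mp <|
    h (vars_subset_of_dvd hdf hf) (vars_subset_of_dvd hdg hg)
  rw [vars_eq_empty_iff_eq_C] at hd
  have hc : d.coeff 0 ≠ 0 := fun hc => hf (zero_dvd_iff.mp (by rwa [hd, hc, C_0] at hdf))
  exact hd ▸ (isUnit_iff_ne_zero.mpr hc).map C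

end MvPolynomial

theorem inT_ne_zero {P : Polynomial ℝ} (hP : P ≠ 0) : inT P ≠ 0 :=
  (map_ne_zero_iff _ (Polynomial.toMvPolynomial_injective 0)).mpr hP

theorem inS_ne_zero {P : Polynomial ℝ} (hP : P ≠ 0) : inS P ≠ 0 :=
  (map_ne_zero_iff _ (Polynomial.toMvPolynomial_injective 1)).mpr hP

theorem isRelPrime_inT_inS {P Q : Polynomial ℝ} (hP : P ≠ 0) (hQ : Q ≠ 0) :
    IsRelPrime (inT P) (inS Q) :=
  isRelPrime_of_disjoint_vars (inT_ne_zero hP) (inS_ne_zero hQ) <|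
    Finset.disjoint_of_subset_left (Polynomial.vars_toMvPolynomial_subset 0 P) <|
      Finset.disjoint_of_subset_right (Polynomial.vars_toMvPolynomial_subset 1 Q)
        (Finset.disjoint_singleton.mpr (by decide))

theorem IsCoprime.inT {P Q : Polynomial ℝ} (h : IsCoprime P Q) : IsCoprime (inT P) (inT Q) :=
  h.map (Polynomial.aeval (X 0)).toRingHom

theorem IsCoprime.inS {P Q : Polynomial ℝ} (h : IsCoprime P Q) : IsCoprime (inS P) (inS Q) :=
  h.map (Polynomial.aeval (X 1)).toRingHom

theorem isRelPrime_muPoly {A B : Polynomial ℝ} (hAB : IsCoprime A B) (hB : B ≠ 0) :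
    IsRelPrime (muPoly A B) (inT B * inS B) := by
  have hT : IsRelPrime (inT A * inS B + inS A * inT B) (inT B) :=
    (hAB.inT.isRelPrime.mul_left (isRelPrime_inT_inS hB hB).symm).add_mul_right_left _
  have hS : IsRelPrime (inS A * inT B + inT A * inS B) (inS B) :=
    (hAB.inS.isRelPrime.mul_left (isRelPrime_inT_inS hB hB)).add_mul_right_left _
  rw [add_comm] at hS
  exact hT.mul_right hS

theorem isRelPrime_nuPoly {C D : Polynomial ℝ} (hCD : IsCoprime C D) (hD : D ≠ 0) (k : ℝ) :
    IsRelPrime (nuPoly C D k) (inT D * inS D) := by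
  set c := MvPolynomial.C ((2 * k + 1) * Real.pi)
  have hT : IsRelPrime (inT C * inS D + (-inS C - c * inS D) * inT D) (inT D) :=
    (hCD.inT.isRelPrime.mul_left (isRelPrime_inT_inS hD hD).symm).add_mul_right_left _
  have hS : IsRelPrime (-inS C * inT D + (inT C - c * inT D) * inS D) (inS D) :=
    (hCD.inS.isRelPrime.neg_left.mul_left (isRelPrime_inT_inS hD hD)).add_mul_right_left _
  have hνT : nuPoly C D k = inT C * inS D + (-inS C - c * inS D) * inT D := by
    unfold nuPoly; ring
  have hνS : nuPoly C D k = -inS C * inT D + (inT C - c * inT D) * inS D := by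
    unfold nuPoly; ring
  exact (hνT ▸ hT).mul_right (hνS ▸ hS)

theorem no_common_divisor_mu_nu_denominators
    (A B C D : Polynomial ℝ) (hB : B ≠ 0) (hD : D ≠ 0)
    (hAB : IsCoprime A B) (hCD : IsCoprime C D) (k₀ : ℝ)
    (b : MvPolynomial (Fin 2) ℝ)
    (hb1 : b ∣ muPoly A B) (hb2 : b ∣ nuPoly C D k₀)
    (hb3 : b ∣ inT B * inS B * inT D * inS D) :
    IsUnit b := by
  have hbBD : IsRelPrime b (inT B * inS B * (inT D * inS D)) :=
    ((isRelPrime_muPoly hAB hB).of_dvd_left hb1).mul_right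
      ((isRelPrime_nuPoly hCD hD k₀).of_dvd_left hb2)
  rw [← mul_assoc] at hbBD
  exact isRelPrime_self.mp (hbBD.of_dvd_right hb3)
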